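/- arXiv:1906.11809 — 2 statements merged into one kernel-verified Lean document; each statement's English description precedes it below -/
import Mathlib

section
/- Per-iteration contraction: let x̃^{(t)} be any point in ℝ^d, let α^{(t+1)} minimize α ↦ f(ASα + Ax̃^{(t)}) + (λ/2)‖Sα + x̃^{(t)}‖₂², and set x̃^{(t+1)} = −λ⁻¹Aᵀ∇f(ASα^{(t+1)} + Ax̃^{(t)}). If λ ≥ 2μZ_f², then ‖x̃^{(t+1)} − x*‖₂ ≤ √(μ/(2λ)) · Z_f · ‖x̃^{(t)} − x*‖₂. -/
open Matrix Finset Real Set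

noncomputable section

namespace Sketch

/-- The ℓ2 norm of a vector in `Fin k → ℝ`. -/
def norm2 {k : ℕ} (x : Fin k → ℝ) : ℝ := Real.sqrt (∑ i, x i ^ 2)

/-- The continuous linear functional `v ↦ ⟨w, v⟩`; used to state that a function has
gradient `w` at a point. -/
def dotCLM {k : ℕ} (w : Fin k → ℝ) : (Fin k → ℝ) →L[ℝ] ℝ :=
  LinearMap.toContinuousLinearMap
    { toFun := fun v => w ⬝ᵥ v
      map_add' := fun a b => dotProduct_add w a b
      map_smul' := fun c a => by
        simp [dotProduct, Finset.mul_sum, mul_left_comm] }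

/-- The domain of the Fenchel conjugate `f*`. -/
def fenchelDom {k : ℕ} (f : (Fin k → ℝ) → ℝ) : Set (Fin k → ℝ) :=
  {z | BddAbove (Set.range fun w => w ⬝ᵥ z - f w)}

/-- The Fenchel conjugate `f*(z) = sup_w (⟨w, z⟩ - f(w))` (as a real-valued supremum,
meaningful on `fenchelDom f`). -/
def fenchel {k : ℕ} (f : (Fin k → ℝ) → ℝ) (z : Fin k → ℝ) : ℝ :=
  ⨆ w, (w ⬝ᵥ z - f w)

/-- The subdifferential of the Fenchel conjugate `f*` at `z`. -/
def fenchelSubdiff {k : ℕ} (f : (Fin k → ℝ) → ℝ) (z : Fin k → ℝ) : Set (Fin k → ℝ) :=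
  {g | ∀ y ∈ fenchelDom f, fenchel f z + g ⬝ᵥ (y - z) ≤ fenchel f y}

/-- `P` is the orthogonal projector onto the range (column space) of `S`. -/
def IsOrthProj {q m : ℕ} (S : Matrix (Fin q) (Fin m) ℝ) (P : Matrix (Fin q) (Fin q) ℝ) : Prop :=
  Pᵀ = P ∧ P * P = P ∧ P * S = S ∧ ∃ C : Matrix (Fin m) (Fin q) ℝ, P = S * C

/-- The quantity `Z_f`: the supremum of `(Δᵀ B P⊥ Bᵀ Δ)^{1/2} / ‖Δ‖₂` over nonzero
`Δ ∈ dom f* - z*`. -/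
def Zf {k q : ℕ} (f : (Fin k → ℝ) → ℝ) (B : Matrix (Fin k) (Fin q) ℝ)
    (Pperp : Matrix (Fin q) (Fin q) ℝ) (zs : Fin k → ℝ) : ℝ :=
  sSup {r | ∃ Δ : Fin k → ℝ, Δ ≠ 0 ∧ zs + Δ ∈ fenchelDom f ∧
    r = Real.sqrt (Δ ⬝ᵥ (B * Pperp * Bᵀ).mulVec Δ) / norm2 Δ}

/-- The spectral norm (largest singular value) of a matrix. -/
def specNorm {a b : ℕ} (M : Matrix (Fin a) (Fin b) ℝ) : ℝ :=
  sSup {r | ∃ v : Fin b → ℝ, norm2 v = 1 ∧ r = norm2 (M.mulVec v)}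

/-- The eigenvalues of `A * Aᵀ` (i.e. the squared singular values of `A`),
sorted in decreasing order. -/
def eigsDesc {n d : ℕ} (A : Matrix (Fin n) (Fin d) ℝ) : Fin n → ℝ := fun i =>
  ((Matrix.isHermitian_mul_conjTranspose_self A).eigenvalues ∘
    Tuple.sort (Matrix.isHermitian_mul_conjTranspose_self A).eigenvalues) i.rev

/-- The spectral tail `R_k(A) = (σ_k² + (1/k) ∑_{j=k+1}^ρ σ_j²)^{1/2}`. -/
def Rk {n d : ℕ} (A : Matrix (Fin n) (Fin d) ℝ) (k : ℕ) : ℝ :=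
  Real.sqrt ((∑ j : Fin n, if (j : ℕ) + 1 = k then eigsDesc A j else 0)
    + (1 / (k : ℝ)) * ∑ j : Fin n, if k ≤ (j : ℕ) then eigsDesc A j else 0)

/-- Product measure on `n × m` matrices with i.i.d. standard Gaussian entries. -/
def gaussMatrix (n m : ℕ) : MeasureTheory.Measure (Fin n → Fin m → ℝ) :=
  MeasureTheory.Measure.pi fun _ => MeasureTheory.Measure.pi fun _ =>
    ProbabilityTheory.gaussianReal 0 1


/-- The largest eigenvalue (Rayleigh quotient supremum) of a symmetric matrix. -/
def eigMax {q : ℕ} (M : Matrix (Fin q) (Fin q) ℝ) : ℝ :=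
  sSup {r | ∃ v : Fin q → ℝ, norm2 v = 1 ∧ r = v ⬝ᵥ M.mulVec v}

/-- The smallest eigenvalue (Rayleigh quotient infimum) of a symmetric matrix. -/
def eigMin {q : ℕ} (M : Matrix (Fin q) (Fin q) ℝ) : ℝ :=
  sInf {r | ∃ v : Fin q → ℝ, norm2 v = 1 ∧ r = v ⬝ᵥ M.mulVec v}

/-!
Optimality of `x*` gives `x* = -λ⁻¹ Aᵀ z*`, so the new error is `-λ⁻¹ AᵀΔ` with
`Δ = ∇f(ASα + Ax̃) - z*`. Optimality of `α` over the sketched subspace says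
`P (AᵀΔ + λu) = 0` for `u = Sα + x̃ - x*`, while `P⊥u = P⊥(x̃ - x*)`. Cocoercivity of `∇f`
(convexity plus `μ`-smoothness) gives `‖Δ‖² ≤ μ⟨AᵀΔ, u⟩ = μ(⟨P⊥AᵀΔ, x̃ - x*⟩ - λ‖Pu‖²)`, and
`‖P⊥AᵀΔ‖ ≤ Z_f ‖Δ‖` because `z* + Δ` is a gradient of `f`, hence lies in `dom f*`.
Pythagoras, `‖AᵀΔ‖² = λ²‖Pu‖² + ‖P⊥AᵀΔ‖²`, then bounds `‖AᵀΔ‖²` by a quadratic in `‖Δ‖` whose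
maximum is `λμZ_f²‖x̃ - x*‖²/2` as soon as `λ ≥ 2μZ_f²`.
-/

section Norm2

variable {k : ℕ}

lemma norm2_eq_norm_toLp (x : Fin k → ℝ) : norm2 x = ‖WithLp.toLp 2 x‖ := by
  simp [norm2, EuclideanSpace.norm_eq]

lemma dotProduct_eq_inner_toLp (x y : Fin k → ℝ) :
    x ⬝ᵥ y = inner ℝ (WithLp.toLp 2 x) (WithLp.toLp 2 y) := by
  simp [EuclideanSpace.inner_toLp_toLp, dotProduct_comm]

lemma norm2_nonneg (x : Fin k → ℝ) : 0 ≤ norm2 x := Real.sqrt_nonneg _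

lemma sq_norm2 (x : Fin k → ℝ) : norm2 x ^ 2 = x ⬝ᵥ x := by
  rw [norm2_eq_norm_toLp, dotProduct_eq_inner_toLp, real_inner_self_eq_norm_sq]

lemma dotProduct_le_norm2_mul_norm2 (x y : Fin k → ℝ) : x ⬝ᵥ y ≤ norm2 x * norm2 y := by
  rw [dotProduct_eq_inner_toLp, norm2_eq_norm_toLp, norm2_eq_norm_toLp]
  exact real_inner_le_norm _ _

lemma norm2_smul (c : ℝ) (x : Fin k → ℝ) : norm2 (c • x) = |c| * norm2 x := by
  rw [norm2_eq_norm_toLp, norm2_eq_norm_toLp, WithLp.toLp_smul, norm_smul, Real.norm_eq_abs]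

lemma norm2_neg (x : Fin k → ℝ) : norm2 (-x) = norm2 x := by
  rw [norm2_eq_norm_toLp, norm2_eq_norm_toLp, WithLp.toLp_neg, norm_neg]

lemma norm2_sub_comm (x y : Fin k → ℝ) : norm2 (x - y) = norm2 (y - x) := by
  rw [norm2_eq_norm_toLp, norm2_eq_norm_toLp, WithLp.toLp_sub, WithLp.toLp_sub, norm_sub_rev]

lemma norm2_pos {x : Fin k → ℝ} (hx : x ≠ 0) : 0 < norm2 x := by
  rw [norm2_eq_norm_toLp, norm_pos_iff]
  simpa using hx

lemma norm2_mulVec_le {a b : ℕ} (M : Matrix (Fin a) (Fin b) ℝ) (v : Fin b → ℝ) :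
    norm2 (M *ᵥ v) ≤ Real.sqrt (∑ i, ∑ j, M i j ^ 2) * norm2 v := by
  rw [norm2, norm2, ← Real.sqrt_mul (by positivity), Finset.sum_mul]
  gcongr with i
  exact Finset.sum_mul_sq_le_sq_mul_sq Finset.univ (M i) v

end Norm2

section Gradient

variable {k : ℕ}

@[simp]
lemma dotCLM_apply (w v : Fin k → ℝ) : dotCLM w v = w ⬝ᵥ v := rfl

lemma hasFDerivAt_comp_mulVec_add {q : ℕ} {F : (Fin k → ℝ) → ℝ} {g : Fin k → ℝ}
    (M : Matrix (Fin k) (Fin q) ℝ) (c : Fin k → ℝ) {p : Fin q → ℝ}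
    (hF : HasFDerivAt F (dotCLM g) (M *ᵥ p + c)) :
    HasFDerivAt (fun x => F (M *ᵥ x + c)) (dotCLM (Mᵀ *ᵥ g)) p := by
  have hM : HasFDerivAt (fun x => M *ᵥ x + c) (LinearMap.toContinuousLinearMap M.mulVecLin) p :=
    (LinearMap.toContinuousLinearMap M.mulVecLin).hasFDerivAt.add_const c
  refine (hF.comp p hM).congr_fderiv ?_
  ext v
  simp [dotProduct_mulVec, mulVec_transpose]

lemma hasFDerivAt_sq_norm2 (y : Fin k → ℝ) :
    HasFDerivAt (fun x => norm2 x ^ 2) (dotCLM ((2 : ℝ) • y)) y := by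
  have hL : HasFDerivAt (fun x : Fin k → ℝ => WithLp.toLp 2 x)
      (PiLp.continuousLinearEquiv 2 ℝ (fun _ : Fin k => ℝ)).symm.toContinuousLinearMap y :=
    (PiLp.continuousLinearEquiv 2 ℝ (fun _ : Fin k => ℝ)).symm.hasFDerivAt
  simp_rw [norm2_eq_norm_toLp]
  refine ((hasStrictFDerivAt_norm_sq _).hasFDerivAt.comp y hL).congr_fderiv ?_
  ext v
  simp [dotProduct_eq_inner_toLp]

lemma eq_zero_of_isMin_of_hasFDerivAt {G : (Fin k → ℝ) → ℝ} {w p : Fin k → ℝ}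
    (hmin : ∀ x, G p ≤ G x) (hG : HasFDerivAt G (dotCLM w) p) : w = 0 := by
  have h := congrArg (fun L => L w) ((IsLocalMin.hasFDerivAt_eq_zero
    (Filter.Eventually.of_forall hmin) hG))
  simpa using h

lemma transpose_mulVec_eq_zero_of_isMin_affine {q : ℕ} {F : (Fin k → ℝ) → ℝ}
    {g : (Fin k → ℝ) → Fin k → ℝ} (hF : ∀ y, HasFDerivAt F (dotCLM (g y)) y)
    (S : Matrix (Fin k) (Fin q) ℝ) (x₀ : Fin k → ℝ) {a₀ : Fin q → ℝ}
    (hmin : ∀ a, F (S *ᵥ a₀ + x₀) ≤ F (S *ᵥ a + x₀)) :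
    Sᵀ *ᵥ g (S *ᵥ a₀ + x₀) = 0 :=
  eq_zero_of_isMin_of_hasFDerivAt hmin (hasFDerivAt_comp_mulVec_add S x₀ (hF _))

lemma hasFDerivAt_ridge {n d : ℕ} {f : (Fin n → ℝ) → ℝ} {f' : (Fin n → ℝ) → Fin n → ℝ}
    (hdiff : ∀ w, HasFDerivAt f (dotCLM (f' w)) w) (A : Matrix (Fin n) (Fin d) ℝ) (lam : ℝ)
    (y : Fin d → ℝ) :
    HasFDerivAt (fun x => f (A *ᵥ x) + lam / 2 * norm2 x ^ 2)
      (dotCLM (Aᵀ *ᵥ f' (A *ᵥ y) + lam • y)) y := by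
  have hfA := hasFDerivAt_comp_mulVec_add A 0 (hdiff (A *ᵥ y + 0))
  simp only [add_zero] at hfA
  refine (hfA.add ((hasFDerivAt_sq_norm2 y).const_mul (lam / 2))).congr_fderiv ?_
  ext v
  simp [add_dotProduct, smul_dotProduct]
  ring

lemma ridge_grad_eq_zero_of_isMin {n d : ℕ} {f : (Fin n → ℝ) → ℝ}
    {f' : (Fin n → ℝ) → Fin n → ℝ} (hdiff : ∀ w, HasFDerivAt f (dotCLM (f' w)) w)
    {A : Matrix (Fin n) (Fin d) ℝ} {lam : ℝ} {xs : Fin d → ℝ}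
    (hxs : ∀ x, f (A *ᵥ xs) + lam / 2 * norm2 xs ^ 2 ≤ f (A *ᵥ x) + lam / 2 * norm2 x ^ 2) :
    Aᵀ *ᵥ f' (A *ᵥ xs) + lam • xs = 0 :=
  eq_zero_of_isMin_of_hasFDerivAt hxs (hasFDerivAt_ridge hdiff A lam xs)

lemma transpose_mulVec_ridge_grad_eq_zero_of_isMin {n d m : ℕ} {f : (Fin n → ℝ) → ℝ}
    {f' : (Fin n → ℝ) → Fin n → ℝ} (hdiff : ∀ w, HasFDerivAt f (dotCLM (f' w)) w)
    {A : Matrix (Fin n) (Fin d) ℝ} {S : Matrix (Fin d) (Fin m) ℝ} {lam : ℝ} {xt : Fin d → ℝ}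
    {αs : Fin m → ℝ}
    (hαs : ∀ a, f ((A * S) *ᵥ αs + A *ᵥ xt) + lam / 2 * norm2 (S *ᵥ αs + xt) ^ 2
        ≤ f ((A * S) *ᵥ a + A *ᵥ xt) + lam / 2 * norm2 (S *ᵥ a + xt) ^ 2) :
    Sᵀ *ᵥ (Aᵀ *ᵥ f' ((A * S) *ᵥ αs + A *ᵥ xt) + lam • (S *ᵥ αs + xt)) = 0 := by
  have h := transpose_mulVec_eq_zero_of_isMin_affine (hasFDerivAt_ridge hdiff A lam) S xt
    (by simpa only [mulVec_add, mulVec_mulVec] using hαs)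
  rwa [mulVec_add A (S *ᵥ αs) xt, mulVec_mulVec] at h

end Gradient

section SmoothConvex

variable {k : ℕ} {f : (Fin k → ℝ) → ℝ} {f' : (Fin k → ℝ) → Fin k → ℝ} {μ : ℝ}

lemma hasDerivAt_comp_add_smul (hdiff : ∀ w, HasFDerivAt f (dotCLM (f' w)) w)
    (x d : Fin k → ℝ) (t : ℝ) :
    HasDerivAt (fun t : ℝ => f (x + t • d)) (f' (x + t • d) ⬝ᵥ d) t := by
  have hline : HasDerivAt (fun t : ℝ => x + t • d) d t := by
    simpa using ((hasDerivAt_id t).smul_const d).const_add x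
  exact (hdiff (x + t • d)).comp_hasDerivAt t hline

lemma add_dotProduct_sub_le_of_convexOn (hconv : ConvexOn ℝ univ f)
    (hdiff : ∀ w, HasFDerivAt f (dotCLM (f' w)) w) (x y : Fin k → ℝ) :
    f x + f' x ⬝ᵥ (y - x) ≤ f y := by
  have hline : ConvexOn ℝ univ (fun t : ℝ => f (x + t • (y - x))) := by
    simpa [Function.comp_def, AffineMap.lineMap_apply, add_comm] using
      hconv.comp_affineMap (AffineMap.lineMap x y)
  have hslope := hline.le_slope_of_hasDerivAt (mem_univ 0) (mem_univ 1) zero_lt_one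
    (by simpa using hasDerivAt_comp_add_smul hdiff x (y - x) 0)
  simp only [slope_def_field, zero_smul, add_zero, one_smul, add_sub_cancel, sub_zero,
    div_one] at hslope
  rw [dotProduct_sub]
  linarith

lemma le_add_dotProduct_sub_add_sq_norm2 (hdiff : ∀ w, HasFDerivAt f (dotCLM (f' w)) w)
    (hsmooth : ∀ w v, norm2 (f' w - f' v) ≤ μ * norm2 (w - v)) (x y : Fin k → ℝ) :
    f y ≤ f x + f' x ⬝ᵥ (y - x) + μ / 2 * norm2 (y - x) ^ 2 := by
  set d := y - x
  let χ : ℝ → ℝ := fun t => f (x + t • d) - t * (f' x ⬝ᵥ d) - μ / 2 * t ^ 2 * norm2 d ^ 2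
  have hχ : ∀ t, HasDerivAt χ (f' (x + t • d) ⬝ᵥ d - f' x ⬝ᵥ d - μ * t * norm2 d ^ 2) t := by
    intro t
    refine (((hasDerivAt_comp_add_smul hdiff x d t).sub
      ((hasDerivAt_id' t).mul_const (f' x ⬝ᵥ d))).sub
      (((hasDerivAt_pow 2 t).const_mul (μ / 2)).mul_const (norm2 d ^ 2))).congr_deriv ?_
    rw [show 2 - 1 = 1 from rfl, pow_one]
    push_cast
    ring
  have hχ_nonpos : ∀ t ∈ interior (Set.Ici (0 : ℝ)),
      f' (x + t • d) ⬝ᵥ d - f' x ⬝ᵥ d - μ * t * norm2 d ^ 2 ≤ 0 := by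
    intro t ht
    rw [interior_Ici, Set.mem_Ioi] at ht
    have hgrad : norm2 (f' (x + t • d) - f' x) ≤ μ * (t * norm2 d) := by
      simpa [norm2_smul, abs_of_pos ht] using hsmooth (x + t • d) x
    have hcs : (f' (x + t • d) - f' x) ⬝ᵥ d ≤ μ * t * norm2 d ^ 2 := calc
      _ ≤ norm2 (f' (x + t • d) - f' x) * norm2 d := dotProduct_le_norm2_mul_norm2 _ _
      _ ≤ μ * (t * norm2 d) * norm2 d := by gcongr; exact norm2_nonneg d
      _ = μ * t * norm2 d ^ 2 := by ring
    rw [sub_dotProduct] at hcs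
    linarith
  have hanti := antitoneOn_of_hasDerivWithinAt_nonpos (convex_Ici 0)
    (fun t _ => (hχ t).continuousAt.continuousWithinAt) (fun t _ => (hχ t).hasDerivWithinAt)
    hχ_nonpos
  have h10 := hanti Set.self_mem_Ici (Set.mem_Ici.mpr zero_le_one) zero_le_one
  simp only [χ, zero_smul, add_zero, one_smul, show x + d = y from add_sub_cancel x y] at h10
  linarith

lemma add_dotProduct_sub_add_sq_norm2_le (hμ : 0 < μ) (hconv : ConvexOn ℝ univ f)
    (hdiff : ∀ w, HasFDerivAt f (dotCLM (f' w)) w)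
    (hsmooth : ∀ w v, norm2 (f' w - f' v) ≤ μ * norm2 (w - v)) (a b : Fin k → ℝ) :
    f b + f' b ⬝ᵥ (a - b) + (2 * μ)⁻¹ * norm2 (f' a - f' b) ^ 2 ≤ f a := by
  set Δ := f' a - f' b
  -- support at `b` and descent at `a`, both evaluated at the gradient step `a - Δ / μ`
  set w := a + (-μ⁻¹) • Δ
  have hsupport := add_dotProduct_sub_le_of_convexOn hconv hdiff b w
  have hdescent := le_add_dotProduct_sub_add_sq_norm2 hdiff hsmooth a w
  have hwa : w - a = (-μ⁻¹) • Δ := by simp [w]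
  have hwb : w - b = (a - b) + (-μ⁻¹) • Δ := by simp [w]; abel
  rw [hwa, norm2_smul, mul_pow, sq_abs, dotProduct_smul, smul_eq_mul] at hdescent
  rw [hwb, dotProduct_add, dotProduct_smul, smul_eq_mul] at hsupport
  have hΔ : f' a ⬝ᵥ Δ - f' b ⬝ᵥ Δ = norm2 Δ ^ 2 := by rw [sq_norm2, ← sub_dotProduct]
  have hcoef : (2 * μ)⁻¹ = μ⁻¹ - μ / 2 * (-μ⁻¹) ^ 2 := by field_simp; ring
  rw [hcoef]
  linear_combination hsupport + hdescent - μ⁻¹ * hΔ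

lemma sq_norm2_sub_le_mul_dotProduct (hμ : 0 < μ) (hconv : ConvexOn ℝ univ f)
    (hdiff : ∀ w, HasFDerivAt f (dotCLM (f' w)) w)
    (hsmooth : ∀ w v, norm2 (f' w - f' v) ≤ μ * norm2 (w - v)) (a b : Fin k → ℝ) :
    norm2 (f' a - f' b) ^ 2 ≤ μ * ((f' a - f' b) ⬝ᵥ (a - b)) := by
  have hab := add_dotProduct_sub_add_sq_norm2_le hμ hconv hdiff hsmooth a b
  have hba := add_dotProduct_sub_add_sq_norm2_le hμ hconv hdiff hsmooth b a
  rw [norm2_sub_comm (f' b)] at hba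
  have hflip : f' a ⬝ᵥ (b - a) = -(f' a ⬝ᵥ (a - b)) := by rw [← dotProduct_neg, neg_sub]
  have hsum : 2 * ((2 * μ)⁻¹ * norm2 (f' a - f' b) ^ 2) ≤ (f' a - f' b) ⬝ᵥ (a - b) := by
    rw [sub_dotProduct]; linarith
  calc norm2 (f' a - f' b) ^ 2 = μ * (2 * ((2 * μ)⁻¹ * norm2 (f' a - f' b) ^ 2)) := by
        field_simp
    _ ≤ μ * ((f' a - f' b) ⬝ᵥ (a - b)) := by gcongr

lemma mem_fenchelDom_of_add_dotProduct_sub_le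
    (hsupport : ∀ x y : Fin k → ℝ, f x + f' x ⬝ᵥ (y - x) ≤ f y) (p : Fin k → ℝ) :
    f' p ∈ fenchelDom f := by
  refine ⟨p ⬝ᵥ f' p - f p, ?_⟩
  rintro _ ⟨w, rfl⟩
  have h := hsupport p w
  rw [dotProduct_sub, dotProduct_comm (f' p) w, dotProduct_comm (f' p) p] at h
  linarith

end SmoothConvex

section Projector

variable {q : ℕ} {P : Matrix (Fin q) (Fin q) ℝ}

lemma transpose_one_sub_of_transpose_eq (hPt : Pᵀ = P) : (1 - P)ᵀ = 1 - P := by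
  rw [transpose_sub, transpose_one, hPt]

lemma mulVec_dotProduct_of_transpose_eq (hPt : Pᵀ = P) (x y : Fin q → ℝ) :
    P *ᵥ x ⬝ᵥ y = x ⬝ᵥ P *ᵥ y := by
  rw [dotProduct_comm, dotProduct_mulVec, ← mulVec_transpose, hPt, dotProduct_comm]

lemma mulVec_dotProduct_mulVec_of_isIdempotentElem (hPt : Pᵀ = P) (hP : IsIdempotentElem P)
    (x y : Fin q → ℝ) : P *ᵥ x ⬝ᵥ P *ᵥ y = P *ᵥ x ⬝ᵥ y := by
  rw [mulVec_dotProduct_of_transpose_eq hPt, mulVec_mulVec, hP.eq,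
    mulVec_dotProduct_of_transpose_eq hPt]

lemma dotProduct_eq_add_one_sub (x y : Fin q → ℝ) :
    x ⬝ᵥ y = P *ᵥ x ⬝ᵥ y + (1 - P) *ᵥ x ⬝ᵥ y := by
  rw [← add_dotProduct, ← add_mulVec, add_sub_cancel, one_mulVec]

lemma dotProduct_self_eq_add_one_sub (hPt : Pᵀ = P) (hP : IsIdempotentElem P) (x : Fin q → ℝ) :
    x ⬝ᵥ x = P *ᵥ x ⬝ᵥ P *ᵥ x + (1 - P) *ᵥ x ⬝ᵥ (1 - P) *ᵥ x := by
  have hQt := transpose_one_sub_of_transpose_eq hPt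
  rw [mulVec_dotProduct_mulVec_of_isIdempotentElem hPt hP,
    mulVec_dotProduct_mulVec_of_isIdempotentElem hQt hP.one_sub, ← dotProduct_eq_add_one_sub]

lemma IsOrthProj.mulVec_eq_zero {m : ℕ} {S : Matrix (Fin q) (Fin m) ℝ} (hP : IsOrthProj S P)
    {v : Fin q → ℝ} (hv : Sᵀ *ᵥ v = 0) : P *ᵥ v = 0 := by
  obtain ⟨hPt, -, -, C, rfl⟩ := hP
  rw [← hPt, transpose_mul, ← mulVec_mulVec, hv, mulVec_zero]

lemma IsOrthProj.one_sub_mulVec_mulVec {m : ℕ} {S : Matrix (Fin q) (Fin m) ℝ}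
    (hP : IsOrthProj S P) (a : Fin m → ℝ) : (1 - P) *ᵥ (S *ᵥ a) = 0 := by
  rw [mulVec_mulVec, Matrix.sub_mul, hP.2.2.1, Matrix.one_mul, sub_self, zero_mulVec]

end Projector

lemma IsOrthProj.mulVec_transpose_grad_sub_add_smul_eq_zero {n d m : ℕ}
    {f : (Fin n → ℝ) → ℝ} {f' : (Fin n → ℝ) → Fin n → ℝ}
    (hdiff : ∀ w, HasFDerivAt f (dotCLM (f' w)) w) {A : Matrix (Fin n) (Fin d) ℝ}
    {S : Matrix (Fin d) (Fin m) ℝ} {P : Matrix (Fin d) (Fin d) ℝ} (hP : IsOrthProj S P)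
    {lam : ℝ} {xs xt : Fin d → ℝ} {αs : Fin m → ℝ}
    (hxs : ∀ x, f (A *ᵥ xs) + lam / 2 * norm2 xs ^ 2 ≤ f (A *ᵥ x) + lam / 2 * norm2 x ^ 2)
    (hαs : ∀ a, f ((A * S) *ᵥ αs + A *ᵥ xt) + lam / 2 * norm2 (S *ᵥ αs + xt) ^ 2
        ≤ f ((A * S) *ᵥ a + A *ᵥ xt) + lam / 2 * norm2 (S *ᵥ a + xt) ^ 2) :
    P *ᵥ (Aᵀ *ᵥ (f' ((A * S) *ᵥ αs + A *ᵥ xt) - f' (A *ᵥ xs)) + lam • (S *ᵥ αs + xt - xs))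
      = 0 := by
  refine hP.mulVec_eq_zero ?_
  rw [show ∀ zt zs : Fin n → ℝ, Aᵀ *ᵥ (zt - zs) + lam • (S *ᵥ αs + xt - xs)
      = (Aᵀ *ᵥ zt + lam • (S *ᵥ αs + xt)) - (Aᵀ *ᵥ zs + lam • xs) by
    intro zt zs; rw [mulVec_sub, smul_sub]; abel]
  rw [mulVec_sub, transpose_mulVec_ridge_grad_eq_zero_of_isMin hdiff hαs,
    ridge_grad_eq_zero_of_isMin hdiff hxs, mulVec_zero, sub_zero]

section Zf

variable {k q : ℕ} (f : (Fin k → ℝ) → ℝ) (B : Matrix (Fin k) (Fin q) ℝ)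
  {Q : Matrix (Fin q) (Fin q) ℝ}

lemma sqrt_dotProduct_mul_mul_transpose_mulVec (hQt : Qᵀ = Q) (hQ : IsIdempotentElem Q)
    (Δ : Fin k → ℝ) : √(Δ ⬝ᵥ (B * Q * Bᵀ) *ᵥ Δ) = norm2 (Q *ᵥ (Bᵀ *ᵥ Δ)) := by
  rw [← mulVec_mulVec, ← mulVec_mulVec, dotProduct_mulVec, ← mulVec_transpose,
    ← mulVec_dotProduct_of_transpose_eq hQt, ← mulVec_dotProduct_mulVec_of_isIdempotentElem hQt hQ,
    ← sq_norm2, Real.sqrt_sq (norm2_nonneg _)]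

lemma Zf_nonneg (zs : Fin k → ℝ) : 0 ≤ Zf f B Q zs := by
  refine Real.sSup_nonneg ?_
  rintro _ ⟨Δ, -, -, rfl⟩
  exact div_nonneg (Real.sqrt_nonneg _) (norm2_nonneg _)

lemma norm2_mulVec_le_Zf_mul (hQt : Qᵀ = Q) (hQ : IsIdempotentElem Q) {zs Δ : Fin k → ℝ}
    (hΔ : zs + Δ ∈ fenchelDom f) : norm2 (Q *ᵥ (Bᵀ *ᵥ Δ)) ≤ Zf f B Q zs * norm2 Δ := by
  rcases eq_or_ne Δ 0 with rfl | hΔ0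
  · simp [norm2]
  have hbdd : BddAbove {r | ∃ Δ : Fin k → ℝ, Δ ≠ 0 ∧ zs + Δ ∈ fenchelDom f ∧
      r = √(Δ ⬝ᵥ (B * Q * Bᵀ) *ᵥ Δ) / norm2 Δ} := by
    refine ⟨√(∑ i, ∑ j, Q i j ^ 2) * √(∑ i, ∑ j, Bᵀ i j ^ 2), ?_⟩
    rintro _ ⟨Δ, hΔ0, -, rfl⟩
    rw [sqrt_dotProduct_mul_mul_transpose_mulVec B hQt hQ, div_le_iff₀ (norm2_pos hΔ0), mul_assoc]
    exact (norm2_mulVec_le _ _).trans (by gcongr; exact norm2_mulVec_le _ _)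
  have hle := le_csSup hbdd ⟨Δ, hΔ0, hΔ, rfl⟩
  rwa [sqrt_dotProduct_mul_mul_transpose_mulVec B hQt hQ, div_le_iff₀ (norm2_pos hΔ0)] at hle

end Zf

lemma norm2_inv_smul_le_of_cocoercive {d : ℕ} {P : Matrix (Fin d) (Fin d) ℝ} (hPt : Pᵀ = P)
    (hP : IsIdempotentElem P) {w u e : Fin d → ℝ} {μ lam Z s : ℝ} (hμ : 0 < μ) (hlam : 0 < lam)
    (hZ0 : 0 ≤ Z) (hZ : 2 * μ * Z ^ 2 ≤ lam) (hwu : P *ᵥ (w + lam • u) = 0)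
    (hue : (1 - P) *ᵥ u = (1 - P) *ᵥ e) (hcoco : s ^ 2 ≤ μ * (w ⬝ᵥ u))
    (hperp : norm2 ((1 - P) *ᵥ w) ≤ Z * s) :
    norm2 (lam⁻¹ • w) ≤ √(μ / (2 * lam)) * Z * norm2 e := by
  have hQt := transpose_one_sub_of_transpose_eq hPt
  have hPw : P *ᵥ w = -(lam • P *ᵥ u) := by
    rw [mulVec_add, mulVec_smul] at hwu
    exact eq_neg_of_add_eq_zero_left hwu
  set p := P *ᵥ u ⬝ᵥ P *ᵥ u
  have hp : 0 ≤ p := by simpa only [sq_norm2] using sq_nonneg (norm2 (P *ᵥ u))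
  have hwu_split : w ⬝ᵥ u = -lam * p + (1 - P) *ᵥ w ⬝ᵥ e := by
    rw [dotProduct_eq_add_one_sub (P := P), ← mulVec_dotProduct_mulVec_of_isIdempotentElem hPt hP,
      ← mulVec_dotProduct_mulVec_of_isIdempotentElem hQt hP.one_sub, hue,
      mulVec_dotProduct_mulVec_of_isIdempotentElem hQt hP.one_sub, hPw, neg_dotProduct,
      smul_dotProduct, smul_eq_mul, neg_mul]
  have hww_split : norm2 w ^ 2 = lam ^ 2 * p + norm2 ((1 - P) *ᵥ w) ^ 2 := by
    rw [sq_norm2, sq_norm2, dotProduct_self_eq_add_one_sub hPt hP, hPw]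
    simp only [neg_dotProduct, dotProduct_neg, smul_dotProduct, dotProduct_smul, smul_eq_mul]
    ring
  have hperp_e : (1 - P) *ᵥ w ⬝ᵥ e ≤ Z * s * norm2 e :=
    (dotProduct_le_norm2_mul_norm2 _ _).trans (by gcongr; exact norm2_nonneg e)
  have hperp_sq : norm2 ((1 - P) *ᵥ w) ^ 2 ≤ (Z * s) ^ 2 := by gcongr; exact norm2_nonneg _
  -- a quadratic in `s`, maximal at `s = μ Z ‖e‖`
  have hmain : 2 * μ * norm2 w ^ 2 ≤ lam * μ ^ 2 * Z ^ 2 * norm2 e ^ 2 := by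
    have hlp : μ * (lam * p) ≤ μ * (Z * s * norm2 e) - s ^ 2 := by nlinarith
    nlinarith [mul_le_mul_of_nonneg_left hlp hlam.le, mul_le_mul_of_nonneg_left hperp_sq hμ.le,
      mul_le_mul_of_nonneg_right hZ (sq_nonneg s),
      mul_nonneg hlam.le (sq_nonneg (s - μ * Z * norm2 e))]
  have hsq : (norm2 (lam⁻¹ • w)) ^ 2 ≤ (√(μ / (2 * lam)) * Z * norm2 e) ^ 2 := by
    rw [norm2_smul, abs_of_pos (inv_pos.mpr hlam), mul_pow, mul_pow, mul_pow,
      Real.sq_sqrt (by positivity), inv_pow, inv_mul_le_iff₀ (by positivity)]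
    calc norm2 w ^ 2 ≤ lam * μ ^ 2 * Z ^ 2 * norm2 e ^ 2 / (2 * μ) := by
          rw [le_div_iff₀ (by positivity)]; linarith
      _ = lam ^ 2 * (μ / (2 * lam) * Z ^ 2 * norm2 e ^ 2) := by field_simp
  exact le_of_pow_le_pow_left₀ two_ne_zero
    (mul_nonneg (mul_nonneg (Real.sqrt_nonneg _) hZ0) (norm2_nonneg e)) hsq

/-- per-iteration contraction: for any point `x̃⁽ᵗ⁾`, if `α⁽ᵗ⁺¹⁾`
minimizes `α ↦ f(A S α + A x̃⁽ᵗ⁾) + (λ/2)‖S α + x̃⁽ᵗ⁾‖₂²` and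
`x̃⁽ᵗ⁺¹⁾ = -λ⁻¹ Aᵀ ∇f(A S α⁽ᵗ⁺¹⁾ + A x̃⁽ᵗ⁾)`, then, provided `λ ≥ 2 μ Z_f²`,
`‖x̃⁽ᵗ⁺¹⁾ - x*‖₂ ≤ √(μ/(2λ)) Z_f ‖x̃⁽ᵗ⁾ - x*‖₂`. -/
theorem statement_8 {n d m : ℕ} (f : (Fin n → ℝ) → ℝ) (f' : (Fin n → ℝ) → Fin n → ℝ)
    (A : Matrix (Fin n) (Fin d) ℝ) (μ lam : ℝ)
    (hμ : 0 < μ) (hlam : 0 < lam)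
    (hconv : ConvexOn ℝ Set.univ f)
    (hdiff : ∀ w, HasFDerivAt f (dotCLM (f' w)) w)
    (hsmooth : ∀ w v, norm2 (f' w - f' v) ≤ μ * norm2 (w - v))
    (S : Matrix (Fin d) (Fin m) ℝ) (P : Matrix (Fin d) (Fin d) ℝ)
    (hP : IsOrthProj S P)
    (xs : Fin d → ℝ)
    (hxs : ∀ x, f (A.mulVec xs) + lam / 2 * norm2 xs ^ 2
        ≤ f (A.mulVec x) + lam / 2 * norm2 x ^ 2)
    (hZ : 2 * μ * Zf f A (1 - P) (f' (A.mulVec xs)) ^ 2 ≤ lam)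
    (xt : Fin d → ℝ) (αs : Fin m → ℝ)
    (hαs : ∀ a : Fin m → ℝ,
      f ((A * S).mulVec αs + A.mulVec xt) + lam / 2 * norm2 (S.mulVec αs + xt) ^ 2
        ≤ f ((A * S).mulVec a + A.mulVec xt) + lam / 2 * norm2 (S.mulVec a + xt) ^ 2) :
    norm2 (-(lam⁻¹ • Aᵀ.mulVec (f' ((A * S).mulVec αs + A.mulVec xt))) - xs)
      ≤ Real.sqrt (μ / (2 * lam)) * Zf f A (1 - P) (f' (A.mulVec xs))
        * norm2 (xt - xs) := by
  have hPt : Pᵀ = P := hP.1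
  have hPidem : IsIdempotentElem P := hP.2.1
  set zs := f' (A *ᵥ xs)
  set zt := f' ((A * S) *ᵥ αs + A *ᵥ xt)
  set u := S *ᵥ αs + xt - xs
  have hsketch := hP.mulVec_transpose_grad_sub_add_smul_eq_zero hdiff hxs hαs
  have hue : (1 - P) *ᵥ u = (1 - P) *ᵥ (xt - xs) := by
    rw [show u = S *ᵥ αs + (xt - xs) from add_sub_assoc _ _ _, mulVec_add,
      hP.one_sub_mulVec_mulVec, zero_add]
  have hcoco : norm2 (zt - zs) ^ 2 ≤ μ * (Aᵀ *ᵥ (zt - zs) ⬝ᵥ u) := by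
    have h := sq_norm2_sub_le_mul_dotProduct hμ hconv hdiff hsmooth
      (A *ᵥ (S *ᵥ αs + xt)) (A *ᵥ xs)
    rwa [← mulVec_sub, dotProduct_mulVec, ← mulVec_transpose, mulVec_add A (S *ᵥ αs) xt,
      mulVec_mulVec] at h
  have hzt : zs + (zt - zs) ∈ fenchelDom f := by
    rw [add_sub_cancel]
    exact mem_fenchelDom_of_add_dotProduct_sub_le (add_dotProduct_sub_le_of_convexOn hconv hdiff) _
  have hperp :=
    norm2_mulVec_le_Zf_mul f A (transpose_one_sub_of_transpose_eq hPt) hPidem.one_sub hzt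
  have hnext : -(lam⁻¹ • Aᵀ *ᵥ zt) - xs = -(lam⁻¹ • Aᵀ *ᵥ (zt - zs)) := by
    rw [← inv_smul_smul₀ hlam.ne' xs,
      eq_neg_of_add_eq_zero_right (ridge_grad_eq_zero_of_isMin hdiff hxs), mulVec_sub, smul_sub,
      smul_neg]
    abel
  rw [hnext, norm2_neg]
  exact norm2_inv_smul_le_of_cocoercive hPt hPidem hμ hlam (Zf_nonneg f A _) hZ hsketch hue hcoco
    hperp

end Sketch
end
end

section
/- Effective-rank lower bound under polynomial spectral decay: for any β > 1/2, any integer ρ ≥ 1, and any λ > 0 with λ ≥ ρ^{−2β}, one has Σ_{i=0}^{ρ} 1/(1 + λ·i^{2β}) ≥ −1 + (λ^{−1/(2β)}/(2β)) · ∫₀¹ u^{1/(2β)−1}/(1+u) du, where the integral is finite and independent of λ. -/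
open Matrix Finset Real Set

noncomputable section

namespace Sketch

/-! With `α = 1/(2β)` and `L = λ^{-α}`, the substitution `x = L u^α` turns
`L α ∫₀¹ u^{α-1}/(1+u) du` into `∫₀^L dx/(1 + λ x^{2β})`. Since `λ ≥ ρ^{-2β}` means `L ≤ ρ`
and the integrand is nonnegative and decreasing, this integral is at most the left Riemann sum
`∑_{i<ρ} 1/(1 + λ i^{2β})`; the term `i = ρ` and the `-1` are slack. -/

theorem intervalIntegrable_rpow_div_one_add {r : ℝ} (hr : -1 < r) :
    IntervalIntegrable (fun u : ℝ => u ^ r / (1 + u)) MeasureTheory.volume 0 1 := by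
  have hinv : ContinuousOn (fun u : ℝ => (1 + u)⁻¹) (uIcc 0 1) := by
    refine ContinuousOn.inv₀ (by fun_prop) fun u hu => ?_
    rw [Set.uIcc_of_le zero_le_one] at hu
    linarith [hu.1]
  simpa only [div_eq_mul_inv] using
    (intervalIntegral.intervalIntegrable_rpow' hr).mul_continuousOn hinv

theorem antitoneOn_one_div_one_add_mul_rpow {lam p : ℝ} (hlam : 0 ≤ lam) (hp : 0 ≤ p) :
    AntitoneOn (fun x : ℝ => 1 / (1 + lam * x ^ p)) (Ici 0) := by
  intro x hx y _ hxy
  have hx' : 0 ≤ lam * x ^ p := mul_nonneg hlam (rpow_nonneg hx p)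
  exact one_div_le_one_div_of_le (by linarith) (by gcongr)

theorem rpow_neg_inv_le_of_rpow_neg_le {lam p n : ℝ} (hp : 0 < p) (hn : 0 < n)
    (h : n ^ (-p) ≤ lam) : lam ^ (-(1 / p)) ≤ n := by
  calc lam ^ (-(1 / p)) ≤ (n ^ (-p)) ^ (-(1 / p)) :=
        rpow_le_rpow_of_nonpos (rpow_pos_of_pos hn _) h (by simp [hp.le])
    _ = n := by rw [← rpow_mul hn.le]; field_simp; simp

theorem integral_one_div_one_add_mul_rpow {lam p : ℝ} (hlam : 0 < lam) (hp : 0 < p) :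
    ∫ x in (0 : ℝ)..lam ^ (-(1 / p)), 1 / (1 + lam * x ^ p)
      = lam ^ (-(1 / p)) / p * ∫ u in (0 : ℝ)..1, u ^ (1 / p - 1) / (1 + u) := by
  set L := lam ^ (-(1 / p))
  have hL : 0 < L := rpow_pos_of_pos hlam _
  have hα : 0 < 1 / p := by positivity
  have hsubst : ∀ u : ℝ, 0 ≤ u → lam * (L * u ^ (1 / p)) ^ p = u := by
    intro u hu
    rw [mul_rpow hL.le (rpow_nonneg hu _), ← rpow_mul hu, ← rpow_mul hlam.le]
    field_simp
    simp [rpow_neg_one, hlam.ne']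
  have hderiv : ∀ u ∈ Ioo (min (0 : ℝ) 1) (max 0 1),
      HasDerivAt (fun u => L * u ^ (1 / p)) (L * (1 / p * u ^ (1 / p - 1))) u := by
    intro u hu
    simp only [zero_le_one, min_eq_left, max_eq_right] at hu
    exact (hasDerivAt_rpow_const (Or.inl hu.1.ne')).const_mul L
  have hcont : ContinuousOn (fun u : ℝ => L * u ^ (1 / p)) (uIcc 0 1) :=
    continuousOn_const.mul (continuousOn_id.rpow_const fun _ _ => Or.inr hα.le)
  have hsub := intervalIntegral.integral_deriv_smul_comp_of_deriv_nonneg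
    (g := fun x : ℝ => 1 / (1 + lam * x ^ p)) hcont hderiv fun u hu => by
      simp only [zero_le_one, min_eq_left, max_eq_right] at hu
      exact mul_nonneg hL.le (mul_nonneg hα.le (rpow_nonneg hu.1.le _))
  simp only [zero_rpow hα.ne', mul_zero, one_rpow, mul_one] at hsub
  rw [← hsub, ← intervalIntegral.integral_const_mul]
  refine intervalIntegral.integral_congr fun u hu => ?_
  rw [Set.uIcc_of_le zero_le_one] at hu
  simp only [Function.comp_apply, smul_eq_mul]
  rw [hsubst u hu.1]
  ring

theorem integral_le_sum_range_of_antitoneOn {f : ℝ → ℝ} (hf : AntitoneOn f (Ici 0))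
    (hf0 : ∀ x, 0 ≤ x → 0 ≤ f x) {L : ℝ} {n : ℕ} (hL : 0 ≤ L) (hLn : L ≤ n) :
    ∫ x in (0 : ℝ)..L, f x ≤ ∑ i ∈ Finset.range n, f i := by
  have hmono : AntitoneOn f (Icc 0 (0 + (n : ℝ))) := hf.mono fun x hx => hx.1
  have hint : IntervalIntegrable f MeasureTheory.volume 0 (0 + (n : ℝ)) :=
    (Set.uIcc_of_le (by positivity : (0 : ℝ) ≤ 0 + n) ▸ hmono).intervalIntegrable
  calc ∫ x in (0 : ℝ)..L, f x ≤ ∫ x in (0 : ℝ)..(0 + (n : ℝ)), f x := by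
        refine intervalIntegral.integral_mono_interval le_rfl hL (by simpa using hLn) ?_ hint
        filter_upwards [MeasureTheory.ae_restrict_mem measurableSet_Ioc] with x hx
        exact hf0 x hx.1.le
    _ ≤ ∑ i ∈ Finset.range n, f (0 + i) := hmono.integral_le_sum
    _ = ∑ i ∈ Finset.range n, f i := by simp only [zero_add]

/-- effective-rank lower bound, polynomial decay: for any `β > 1/2`,
integer `ρ ≥ 1` and `λ > 0` with `λ ≥ ρ^{-2β}`, the integral
`∫₀¹ u^{1/(2β)-1}/(1+u) du` is finite, and
`∑_{i=0}^ρ 1/(1 + λ i^{2β}) ≥ -1 + (λ^{-1/(2β)}/(2β)) ∫₀¹ u^{1/(2β)-1}/(1+u) du`. -/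
theorem statement_15 (β lam : ℝ) (ρ : ℕ) (hβ : 1 / 2 < β) (hρ : 1 ≤ ρ) (hlam : 0 < lam)
    (hlam' : (ρ : ℝ) ^ (-(2 * β)) ≤ lam) :
    IntervalIntegrable (fun u : ℝ => u ^ (1 / (2 * β) - 1) / (1 + u))
      MeasureTheory.volume 0 1 ∧
    -1 + lam ^ (-(1 / (2 * β))) / (2 * β)
        * ∫ u in (0 : ℝ)..1, u ^ (1 / (2 * β) - 1) / (1 + u)
      ≤ ∑ i ∈ Finset.range (ρ + 1), 1 / (1 + lam * (i : ℝ) ^ (2 * β)) := by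
  have hp : 0 < 2 * β := by linarith
  have hρ0 : (0 : ℝ) < ρ := by exact_mod_cast hρ
  have hα : 0 < 1 / (2 * β) := by positivity
  refine ⟨intervalIntegrable_rpow_div_one_add (by linarith), ?_⟩
  rw [← integral_one_div_one_add_mul_rpow hlam hp, Finset.sum_range_succ]
  have hlast : 0 ≤ 1 / (1 + lam * (ρ : ℝ) ^ (2 * β)) := by positivity
  have hint := integral_le_sum_range_of_antitoneOn
    (antitoneOn_one_div_one_add_mul_rpow hlam.le hp.le)
    (fun x hx => by positivity) (rpow_nonneg hlam.le _)
    (rpow_neg_inv_le_of_rpow_neg_le hp hρ0 hlam')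
  linarith

end Sketch
end
end
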